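/- arXiv:2208.01026 — 6 statements merged into one kernel-verified Lean document; each statement's English description precedes it below -/
import Mathlib

section
/- Let d ≥ 1 and D > 0, and let M be the normalized Maxwellian on ℝ^d. There exist constants C > 0 and C_M > 0, depending only on d and D, with the following property: for every ε > 0, every r ∈ (0,1], and every measurable f : ℝ^d → [0,∞) with ρ := ∫_{ℝ^d} f(ξ) dξ ∈ (0,∞) and ∫_{ℝ^d} |ξ| f(ξ) dξ < ∞, setting J := ε^{-1} ∫_{ℝ^d} ξ (f(ξ) − ρ M(ξ)) dξ ∈ ℝ^d, one has |J| ≤ r ε ∫_{ℝ^d} 𝒟(ξ) dξ + C r^{-d} exp(2 C_M / r²) ρ^{1/2} (∫_{ℝ^d} 𝒟(ξ) dξ)^{1/2}, the inequality being understood in [0,∞]. -/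
open MeasureTheory
open scoped ENNReal Classical

/-- The normalized Maxwellian on `ℝ^d` with diffusion coefficient `D`:
`M(ξ) = (2πD)^{-d/2} exp(−|ξ|²/(2D))`. -/
noncomputable def maxwellian (d : ℕ) (D : ℝ) (ξ : EuclideanSpace ℝ (Fin d)) : ℝ :=
  (2 * Real.pi * D) ^ (-(d : ℝ) / 2) * Real.exp (-‖ξ‖ ^ 2 / (2 * D))

/-- The dissipation density `𝒟(ξ) = ε⁻² (f(ξ) − ρM(ξ))(log f(ξ) − log (ρM(ξ)))`, as a
`[0,∞]`-valued function: it is `+∞` at points where `f` vanishes but `ρM` does not,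
and given by the obvious formula elsewhere (in particular `0` where `f = ρM`). -/
noncomputable def dissipation (d : ℕ) (D ε ρ : ℝ) (f : EuclideanSpace ℝ (Fin d) → ℝ)
    (ξ : EuclideanSpace ℝ (Fin d)) : ℝ≥0∞ :=
  if f ξ = 0 ∧ ρ * maxwellian d D ξ ≠ 0 then ⊤
  else ENNReal.ofReal
    ((f ξ - ρ * maxwellian d D ξ) * (Real.log (f ξ) - Real.log (ρ * maxwellian d D ξ)) / ε ^ 2)

/-! With `a = f(ξ)`, `b = ρM(ξ)` and `x = |ξ|`, either `x ≤ r |log a - log b|`, and then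
`x |a - b| ≤ r (a - b)(log a - log b)`, or `a < b e^{x/r}`, and then
`x |a - b| = x |√a - √b| (√a + √b) ≤ 2x e^{x/(2r)} √b |√a - √b|`.
Integrating, Cauchy–Schwarz together with `(√a - √b)² ≤ (a - b)(log a - log b)` bounds the second
part by `(∫ 4|ξ|² e^{|ξ|/r} ρM)^{1/2} (∫ ε²𝒟)^{1/2}`. Completing the square,
`|ξ|/r - |ξ|²/(2D) ≤ D/r² - |ξ|²/(4D)`, so this Gaussian moment is at most
`32 D 4^{d/2} ρ e^{D/r²}`, which gives the estimate with `C_M = D/4`. -/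

open Real

theorem sub_mul_log_sub_log_nonneg {a b : ℝ} (ha : 0 < a) (hb : 0 < b) :
    0 ≤ (a - b) * (log a - log b) := by
  rcases le_total a b with h | h
  · exact mul_nonneg_of_nonpos_of_nonpos (sub_nonpos.2 h) (sub_nonpos.2 (log_le_log ha h))
  · exact mul_nonneg (sub_nonneg.2 h) (sub_nonneg.2 (log_le_log hb h))

private theorem sqrt_sub_sqrt_sq_le_sub_mul_log_sub_log_of_le {a b : ℝ} (hb : 0 < b)
    (hba : b ≤ a) : (√a - √b) ^ 2 ≤ (a - b) * (log a - log b) := by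
  have ha : 0 < a := hb.trans_le hba
  -- `log (a / b) ≥ 1 - b / a` and `(√a + √b)² ≥ a`
  have hlog : (a - b) / a ≤ log a - log b := by
    have := one_sub_inv_le_log_of_pos (div_pos ha hb)
    rwa [log_div ha.ne' hb.ne', inv_div, one_sub_div ha.ne'] at this
  have hsum : a ≤ (√a + √b) ^ 2 := by
    nlinarith [sq_sqrt ha.le, sqrt_nonneg a, sqrt_nonneg b]
  have hdiff : a - b = (√a - √b) * (√a + √b) := by
    nlinarith [sq_sqrt ha.le, sq_sqrt hb.le]
  calc (√a - √b) ^ 2 ≤ (√a - √b) ^ 2 * (√a + √b) ^ 2 / a := by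
        rw [le_div_iff₀ ha]; exact mul_le_mul_of_nonneg_left hsum (sq_nonneg _)
    _ = (a - b) * ((a - b) / a) := by rw [hdiff]; ring
    _ ≤ (a - b) * (log a - log b) := mul_le_mul_of_nonneg_left hlog (sub_nonneg.2 hba)

theorem sqrt_sub_sqrt_sq_le_sub_mul_log_sub_log {a b : ℝ} (ha : 0 < a) (hb : 0 < b) :
    (√a - √b) ^ 2 ≤ (a - b) * (log a - log b) := by
  rcases le_total b a with h | h
  · exact sqrt_sub_sqrt_sq_le_sub_mul_log_sub_log_of_le hb h
  · have := sqrt_sub_sqrt_sq_le_sub_mul_log_sub_log_of_le ha h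
    linarith

theorem mul_abs_sub_le_sub_mul_log_sub_log_add {a b x r : ℝ} (ha : 0 < a) (hb : 0 < b)
    (hx : 0 ≤ x) (hr : 0 < r) :
    x * |a - b| ≤ r * ((a - b) * (log a - log b))
      + 2 * x * exp (x / (2 * r)) * √b * |√a - √b| := by
  have hkernel : (a - b) * (log a - log b) = |a - b| * |log a - log b| := by
    rw [← abs_mul, abs_of_nonneg (sub_mul_log_sub_log_nonneg ha hb)]
  have hkernel_nonneg := sub_mul_log_sub_log_nonneg ha hb
  rcases le_or_gt x (r * |log a - log b|) with hsmall | hlarge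
  · have hrest : 0 ≤ 2 * x * exp (x / (2 * r)) * √b * |√a - √b| := by positivity
    nlinarith [mul_le_mul_of_nonneg_right hsmall (abs_nonneg (a - b))]
  · -- here `a < b e^{x/r}`, so `√a + √b ≤ 2 √b e^{x/(2r)}`
    have hlog : log a < log (b * exp (x / r)) := by
      rw [log_mul hb.ne' (exp_pos _).ne', log_exp, ← sub_lt_iff_lt_add', lt_div_iff₀ hr]
      nlinarith [le_abs_self (log a - log b)]
    have hsqrt : √a < √b * exp (x / (2 * r)) := by
      rw [sqrt_lt' (by positivity), mul_pow, sq_sqrt hb.le, ← exp_nat_mul]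
      convert (log_lt_log_iff ha (by positivity)).1 hlog using 3
      field_simp
      ring
    have hb_le : √b ≤ √b * exp (x / (2 * r)) :=
      le_mul_of_one_le_right (sqrt_nonneg b) (one_le_exp (by positivity))
    have hdiff : |a - b| = |√a - √b| * (√a + √b) := by
      rw [← abs_of_nonneg (by positivity : 0 ≤ √a + √b), ← abs_mul]
      congr 1
      nlinarith [sq_sqrt ha.le, sq_sqrt hb.le]
    have hsum : √a + √b ≤ 2 * (√b * exp (x / (2 * r))) := by linarith
    calc x * |a - b| = x * |√a - √b| * (√a + √b) := by rw [hdiff]; ring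
      _ ≤ x * |√a - √b| * (2 * (√b * exp (x / (2 * r)))) := by gcongr
      _ ≤ _ := by nlinarith [mul_nonneg hr.le hkernel_nonneg]

noncomputable def dissipationKernel (a b : ℝ) : ℝ≥0∞ :=
  if a = 0 ∧ b ≠ 0 then ⊤ else ENNReal.ofReal ((a - b) * (log a - log b))

theorem dissipationKernel_of_pos {a b : ℝ} (ha : 0 < a) :
    dissipationKernel a b = ENNReal.ofReal ((a - b) * (log a - log b)) :=
  if_neg fun h => ha.ne' h.1

theorem dissipationKernel_zero_left {b : ℝ} (hb : b ≠ 0) : dissipationKernel 0 b = ⊤ :=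
  if_pos ⟨rfl, hb⟩

theorem ofReal_abs_sqrt_sub_sqrt_rpow_two_le_dissipationKernel {a b : ℝ} (ha : 0 ≤ a)
    (hb : 0 < b) : ENNReal.ofReal |√a - √b| ^ (2 : ℝ) ≤ dissipationKernel a b := by
  rcases ha.eq_or_lt with rfl | ha
  · rw [dissipationKernel_zero_left hb.ne']
    exact le_top
  rw [dissipationKernel_of_pos ha, ENNReal.ofReal_rpow_of_nonneg (abs_nonneg _) zero_le_two,
    rpow_two, sq_abs]
  exact ENNReal.ofReal_le_ofReal (sqrt_sub_sqrt_sq_le_sub_mul_log_sub_log ha hb)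

theorem ofReal_mul_abs_sub_le {a b x r : ℝ} (ha : 0 ≤ a) (hb : 0 < b) (hx : 0 ≤ x)
    (hr : 0 < r) :
    ENNReal.ofReal (x * |a - b|) ≤ ENNReal.ofReal r * dissipationKernel a b
      + ENNReal.ofReal (2 * x * exp (x / (2 * r)) * √b) * ENNReal.ofReal |√a - √b| := by
  rcases ha.eq_or_lt with rfl | ha
  · rw [dissipationKernel_zero_left hb.ne', ENNReal.mul_top (by simpa using hr), top_add]
    exact le_top
  rw [dissipationKernel_of_pos ha, ← ENNReal.ofReal_mul hr.le, ← ENNReal.ofReal_mul (by positivity),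
    ← ENNReal.ofReal_add (mul_nonneg hr.le (sub_mul_log_sub_log_nonneg ha hb)) (by positivity)]
  exact ENNReal.ofReal_le_ofReal (mul_abs_sub_le_sub_mul_log_sub_log_add ha hb hx hr)

theorem lintegral_mul_abs_sub_le {α : Type*} [MeasurableSpace α] {μ : Measure α}
    {a b w : α → ℝ} {r : ℝ} (ha : Measurable a) (hb : Measurable b) (hw : Measurable w)
    (ha0 : ∀ x, 0 ≤ a x) (hb0 : ∀ x, 0 < b x) (hw0 : ∀ x, 0 ≤ w x) (hr : 0 < r) :
    ∫⁻ x, ENNReal.ofReal (w x * |a x - b x|) ∂μ ≤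
      ENNReal.ofReal r * ∫⁻ x, dissipationKernel (a x) (b x) ∂μ
        + (∫⁻ x, ENNReal.ofReal (4 * w x ^ 2 * exp (w x / r) * b x) ∂μ) ^ (1 / 2 : ℝ)
          * (∫⁻ x, dissipationKernel (a x) (b x) ∂μ) ^ (1 / 2 : ℝ) := by
  set G := fun x => ENNReal.ofReal (2 * w x * exp (w x / (2 * r)) * √(b x))
  set S := fun x => ENNReal.ofReal |√(a x) - √(b x)|
  have hG : Measurable G := by fun_prop
  have hS : Measurable S := by fun_prop
  have hG_sq : ∀ x, G x ^ (2 : ℝ) = ENNReal.ofReal (4 * w x ^ 2 * exp (w x / r) * b x) := by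
    intro x
    have hwx := hw0 x
    rw [ENNReal.ofReal_rpow_of_nonneg (by positivity) zero_le_two, rpow_two, mul_pow, mul_pow,
      mul_pow, sq_sqrt (hb0 x).le, ← exp_nat_mul]
    push_cast
    ring_nf
  calc ∫⁻ x, ENNReal.ofReal (w x * |a x - b x|) ∂μ
      ≤ ∫⁻ x, (ENNReal.ofReal r * dissipationKernel (a x) (b x) + G x * S x) ∂μ :=
        lintegral_mono fun x => ofReal_mul_abs_sub_le (ha0 x) (hb0 x) (hw0 x) hr
    _ = ENNReal.ofReal r * ∫⁻ x, dissipationKernel (a x) (b x) ∂μ + ∫⁻ x, G x * S x ∂μ := by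
        rw [lintegral_add_right (g := fun x => G x * S x) _ (hG.mul hS),
          lintegral_const_mul' _ _ ENNReal.ofReal_ne_top]
    _ ≤ _ := by
        gcongr
        refine (ENNReal.lintegral_mul_le_Lp_mul_Lq μ Real.HolderConjugate.two_two
          hG.aemeasurable hS.aemeasurable).trans ?_
        simp_rw [hG_sq]
        gcongr with x
        exact ofReal_abs_sqrt_sub_sqrt_rpow_two_le_dissipationKernel (ha0 x) (hb0 x)

theorem ofReal_norm_smul_integral_smul_le {α E : Type*} [MeasurableSpace α] {μ : Measure α}
    [NormedAddCommGroup E] [NormedSpace ℝ E] {s : ℝ} (hs : 0 ≤ s) (g : α → ℝ) (v : α → E) :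
    ENNReal.ofReal ‖s • ∫ x, g x • v x ∂μ‖ ≤
      ENNReal.ofReal s * ∫⁻ x, ENNReal.ofReal (‖v x‖ * |g x|) ∂μ := by
  rw [norm_smul, norm_of_nonneg hs, ENNReal.ofReal_mul hs, ofReal_norm]
  gcongr
  refine (enorm_integral_le_lintegral_enorm _).trans_eq (lintegral_congr fun x => ?_)
  rw [← ofReal_norm, norm_smul, norm_eq_abs, mul_comm]

theorem ofReal_inv_mul_add_eq {ε r : ℝ} (hε : 0 < ε) (hr : 0 ≤ r) (B I : ℝ≥0∞) :
    ENNReal.ofReal ε⁻¹ * (ENNReal.ofReal r * I + B * I ^ (1 / 2 : ℝ)) =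
      ENNReal.ofReal (r * ε) * (ENNReal.ofReal (ε ^ 2)⁻¹ * I)
        + B * (ENNReal.ofReal (ε ^ 2)⁻¹ * I) ^ (1 / 2 : ℝ) := by
  have hsqrt : ENNReal.ofReal (ε ^ 2)⁻¹ ^ (1 / 2 : ℝ) = ENNReal.ofReal ε⁻¹ := by
    rw [ENNReal.ofReal_rpow_of_nonneg (by positivity) one_half_pos.le, ← sqrt_eq_rpow, ← inv_pow,
      sqrt_sq (by positivity)]
  have hscale : ENNReal.ofReal (r * ε) * ENNReal.ofReal (ε ^ 2)⁻¹ =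
      ENNReal.ofReal ε⁻¹ * ENNReal.ofReal r := by
    rw [← ENNReal.ofReal_mul (by positivity), ← ENNReal.ofReal_mul (by positivity)]
    congr 1
    field_simp
  rw [ENNReal.mul_rpow_of_nonneg _ _ one_half_pos.le, hsqrt, ← mul_assoc, hscale]
  ring

theorem dissipation_eq (d : ℕ) (D ρ : ℝ) {ε : ℝ} (hε : ε ≠ 0) (f : EuclideanSpace ℝ (Fin d) → ℝ)
    (ξ : EuclideanSpace ℝ (Fin d)) :
    dissipation d D ε ρ f ξ =
      ENNReal.ofReal (ε ^ 2)⁻¹ * dissipationKernel (f ξ) (ρ * maxwellian d D ξ) := by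
  unfold dissipation dissipationKernel
  split_ifs
  · exact (ENNReal.mul_top (by simpa using hε)).symm
  · rw [← ENNReal.ofReal_mul (by positivity), inv_mul_eq_div]

theorem lintegral_dissipation_eq (d : ℕ) (D ρ : ℝ) {ε : ℝ} (hε : ε ≠ 0)
    (f : EuclideanSpace ℝ (Fin d) → ℝ) :
    ∫⁻ ξ, dissipation d D ε ρ f ξ =
      ENNReal.ofReal (ε ^ 2)⁻¹ * ∫⁻ ξ, dissipationKernel (f ξ) (ρ * maxwellian d D ξ) := by
  simp_rw [dissipation_eq d D ρ hε f]
  exact lintegral_const_mul' _ _ ENNReal.ofReal_ne_top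

theorem maxwellian_pos (d : ℕ) {D : ℝ} (hD : 0 < D) (ξ : EuclideanSpace ℝ (Fin d)) :
    0 < maxwellian d D ξ := by
  unfold maxwellian
  have hbase : 0 < 2 * π * D := by positivity
  positivity

theorem measurable_maxwellian (d : ℕ) (D : ℝ) : Measurable (maxwellian d D) := by
  unfold maxwellian
  fun_prop

theorem sq_mul_exp_div_sub_sq_le {D r : ℝ} (hD : 0 < D) (hr : r ≠ 0) (x : ℝ) :
    x ^ 2 * exp (x / r - x ^ 2 / (2 * D)) ≤ 8 * D * exp (D / r ^ 2) * exp (-(8 * D)⁻¹ * x ^ 2) := by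
  have hsq : x ^ 2 ≤ 8 * D * exp (x ^ 2 / (8 * D)) := by
    have := add_one_le_exp (x ^ 2 / (8 * D))
    rw [← div_le_iff₀' (by positivity)]
    linarith
  have hexp : x / r - x ^ 2 / (2 * D) ≤ D / r ^ 2 - x ^ 2 / (4 * D) := by
    have hsq_nonneg : 0 ≤ (x - 2 * D / r) ^ 2 / (4 * D) := by positivity
    have h : D / r ^ 2 - x ^ 2 / (4 * D) - (x / r - x ^ 2 / (2 * D)) =
        (x - 2 * D / r) ^ 2 / (4 * D) := by
      field_simp
      ring
    linarith
  calc x ^ 2 * exp (x / r - x ^ 2 / (2 * D))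
      ≤ 8 * D * exp (x ^ 2 / (8 * D)) * exp (D / r ^ 2 - x ^ 2 / (4 * D)) := by
        gcongr
    _ = 8 * D * exp (D / r ^ 2) * exp (-(8 * D)⁻¹ * x ^ 2) := by
        simp only [mul_assoc, ← exp_add]
        ring_nf

theorem lintegral_ofReal_exp_neg_mul_sq_norm {V : Type*} [NormedAddCommGroup V]
    [InnerProductSpace ℝ V] [FiniteDimensional ℝ V] [MeasurableSpace V] [BorelSpace V]
    {b : ℝ} (hb : 0 < b) :
    ∫⁻ v : V, ENNReal.ofReal (exp (-b * ‖v‖ ^ 2)) =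
      ENNReal.ofReal ((π / b) ^ (Module.finrank ℝ V / 2 : ℝ)) := by
  have h := GaussianFourier.integral_rexp_neg_mul_sq_norm (V := V) hb
  have hint : Integrable fun v : V => exp (-b * ‖v‖ ^ 2) :=
    Integrable.of_integral_ne_zero (by rw [h]; positivity)
  rw [← h, ofReal_integral_eq_lintegral_ofReal hint (ae_of_all _ fun v => (exp_pos _).le)]

theorem lintegral_moment_maxwellian_le (d : ℕ) {D ρ r : ℝ} (hD : 0 < D) (hρ : 0 ≤ ρ)
    (hr : r ≠ 0) :
    ∫⁻ ξ : EuclideanSpace ℝ (Fin d),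
        ENNReal.ofReal (4 * ‖ξ‖ ^ 2 * exp (‖ξ‖ / r) * (ρ * maxwellian d D ξ)) ≤
      ENNReal.ofReal (32 * D * 4 ^ ((d : ℝ) / 2) * ρ * exp (D / r ^ 2)) := by
  set c := (2 * π * D) ^ (-(d : ℝ) / 2) with hc_def
  set K := 32 * D * ρ * c * exp (D / r ^ 2)
  have hK : 0 ≤ K := by positivity
  have hnorm : c * (π / (8 * D)⁻¹) ^ ((d : ℝ) / 2) = 4 ^ ((d : ℝ) / 2) := by
    have h : π / (8 * D)⁻¹ = 4 * (2 * π * D) := by rw [div_inv_eq_mul]; ring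
    have hpos : 0 < (2 * π * D) ^ ((d : ℝ) / 2) := by positivity
    rw [hc_def, h, mul_rpow (x := 4) (by norm_num) (by positivity), mul_comm (4 ^ _), neg_div,
      rpow_neg (by positivity), inv_mul_cancel_left₀ hpos.ne']
  calc ∫⁻ ξ : EuclideanSpace ℝ (Fin d),
        ENNReal.ofReal (4 * ‖ξ‖ ^ 2 * exp (‖ξ‖ / r) * (ρ * maxwellian d D ξ))
      ≤ ∫⁻ ξ : EuclideanSpace ℝ (Fin d), ENNReal.ofReal K * ENNReal.ofReal
          (exp (-(8 * D)⁻¹ * ‖ξ‖ ^ 2)) := by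
        gcongr with ξ
        rw [← ENNReal.ofReal_mul hK]
        refine ENNReal.ofReal_le_ofReal ?_
        have hweight := sq_mul_exp_div_sub_sq_le hD hr ‖ξ‖
        calc 4 * ‖ξ‖ ^ 2 * exp (‖ξ‖ / r) * (ρ * maxwellian d D ξ)
            = 4 * ρ * c * (‖ξ‖ ^ 2 * exp (‖ξ‖ / r - ‖ξ‖ ^ 2 / (2 * D))) := by
              rw [maxwellian, ← hc_def, sub_eq_add_neg, exp_add, neg_div]; ring
          _ ≤ 4 * ρ * c * (8 * D * exp (D / r ^ 2) * exp (-(8 * D)⁻¹ * ‖ξ‖ ^ 2)) := by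
              gcongr
          _ = K * exp (-(8 * D)⁻¹ * ‖ξ‖ ^ 2) := by ring
    _ = ENNReal.ofReal (32 * D * 4 ^ ((d : ℝ) / 2) * ρ * exp (D / r ^ 2)) := by
        rw [lintegral_const_mul' _ _ ENNReal.ofReal_ne_top,
          lintegral_ofReal_exp_neg_mul_sq_norm (by positivity), finrank_euclideanSpace_fin,
          ← ENNReal.ofReal_mul hK]
        congr 1
        calc K * (π / (8 * D)⁻¹) ^ ((d : ℝ) / 2)
            = 32 * D * ρ * exp (D / r ^ 2) * (c * (π / (8 * D)⁻¹) ^ ((d : ℝ) / 2)) := by ring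
          _ = 32 * D * 4 ^ ((d : ℝ) / 2) * ρ * exp (D / r ^ 2) := by
            rw [hnorm]; ring

theorem sqrt_mul_exp_le_rpow_neg_mul {K ρ D r : ℝ} (hK : 0 ≤ K) (hρ : 0 ≤ ρ) (hr : 0 < r)
    (hr1 : r ≤ 1) (d : ℕ) :
    √(K * ρ * exp (D / r ^ 2)) ≤ √K * r ^ (-(d : ℝ)) * exp (D / (2 * r ^ 2)) * √ρ := by
  have hrd : 1 ≤ r ^ (-(d : ℝ)) :=
    one_le_rpow_of_pos_of_le_one_of_nonpos hr hr1 (neg_nonpos.2 d.cast_nonneg)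
  have hexp : exp (D / (2 * r ^ 2)) ^ 2 = exp (D / r ^ 2) := by
    rw [← exp_nat_mul]; congr 1; push_cast; field_simp
  rw [sqrt_le_left (by positivity), mul_pow, mul_pow, mul_pow, sq_sqrt hK, sq_sqrt hρ, hexp]
  have hrd_sq : 1 ≤ (r ^ (-(d : ℝ))) ^ 2 := one_le_pow₀ hrd
  have hprod : 0 ≤ K * ρ * exp (D / r ^ 2) := by positivity
  nlinarith

theorem lintegral_moment_maxwellian_rpow_le (d : ℕ) {D ρ r : ℝ} (hD : 0 < D) (hρ : 0 ≤ ρ)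
    (hr : 0 < r) (hr1 : r ≤ 1) :
    (∫⁻ ξ : EuclideanSpace ℝ (Fin d),
        ENNReal.ofReal (4 * ‖ξ‖ ^ 2 * exp (‖ξ‖ / r) * (ρ * maxwellian d D ξ))) ^ (1 / 2 : ℝ) ≤
      ENNReal.ofReal (√(32 * D * 4 ^ ((d : ℝ) / 2)) * r ^ (-(d : ℝ)) * exp (D / (2 * r ^ 2))
        * √ρ) := by
  refine (ENNReal.rpow_le_rpow (lintegral_moment_maxwellian_le d hD hρ hr.ne')
    one_half_pos.le).trans ?_
  rw [ENNReal.ofReal_rpow_of_nonneg (by positivity) one_half_pos.le, ← sqrt_eq_rpow]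
  exact ENNReal.ofReal_le_ofReal (sqrt_mul_exp_le_rpow_neg_mul (by positivity) hρ hr hr1 d)

theorem pointwise_estimate_J_general (d : ℕ) (D : ℝ) (hD : 0 < D) :
    ∃ C > (0 : ℝ), ∃ CM > (0 : ℝ),
      ∀ ε : ℝ, 0 < ε → ∀ r : ℝ, 0 < r → r ≤ 1 →
      ∀ f : EuclideanSpace ℝ (Fin d) → ℝ, Measurable f → (∀ ξ, 0 ≤ f ξ) →
        Integrable f → 0 < ∫ ξ, f ξ →
        Integrable (fun ξ => ‖ξ‖ * f ξ) →
        ENNReal.ofReal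
            ‖ε⁻¹ • ∫ ξ, (f ξ - (∫ η, f η) * maxwellian d D ξ) • ξ‖ ≤
          ENNReal.ofReal (r * ε) * (∫⁻ ξ, dissipation d D ε (∫ η, f η) f ξ) +
            ENNReal.ofReal (C * r ^ (-(d : ℝ)) * Real.exp (2 * CM / r ^ 2) *
                Real.sqrt (∫ η, f η)) *
              (∫⁻ ξ, dissipation d D ε (∫ η, f η) f ξ) ^ (1 / 2 : ℝ) := by
  refine ⟨√(32 * D * 4 ^ ((d : ℝ) / 2)), by positivity, D / 4, by positivity, ?_⟩
  intro ε hε r hr hr1 f hf hf0 _ hρ _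
  have hb : ∀ ξ, 0 < (∫ η, f η) * maxwellian d D ξ := fun ξ => mul_pos hρ (maxwellian_pos d hD ξ)
  rw [lintegral_dissipation_eq d D _ hε.ne', show 2 * (D / 4) / r ^ 2 = D / (2 * r ^ 2) by ring,
    ← ofReal_inv_mul_add_eq hε hr.le]
  refine (ofReal_norm_smul_integral_smul_le (inv_nonneg.2 hε.le) _ _).trans ?_
  gcongr
  refine (lintegral_mul_abs_sub_le hf ((measurable_maxwellian d D).const_mul _) measurable_norm
    hf0 hb norm_nonneg hr).trans ?_
  gcongr
  exact lintegral_moment_maxwellian_rpow_le d hD hρ.le hr hr1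

/-- pointwise estimate on the flux `J`: there are constants `C, C_M > 0`
depending only on `d` and `D` such that for every `ε > 0`, `r ∈ (0,1]` and nonnegative
measurable `f` with `ρ := ∫ f ∈ (0,∞)` and `∫ |ξ| f < ∞`, the flux
`J := ε⁻¹ ∫ ξ (f(ξ) − ρM(ξ)) dξ` satisfies
`|J| ≤ r ε ∫ 𝒟 + C r^{−d} exp(2C_M/r²) ρ^{1/2} (∫ 𝒟)^{1/2}` in `[0,∞]`. -/
theorem pointwise_estimate_J (d : ℕ) (hd : 1 ≤ d) (D : ℝ) (hD : 0 < D) :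
    ∃ C > (0 : ℝ), ∃ CM > (0 : ℝ),
      ∀ ε : ℝ, 0 < ε → ∀ r : ℝ, 0 < r → r ≤ 1 →
      ∀ f : EuclideanSpace ℝ (Fin d) → ℝ, Measurable f → (∀ ξ, 0 ≤ f ξ) →
        Integrable f → 0 < ∫ ξ, f ξ →
        Integrable (fun ξ => ‖ξ‖ * f ξ) →
        ENNReal.ofReal
            ‖ε⁻¹ • ∫ ξ, (f ξ - (∫ η, f η) * maxwellian d D ξ) • ξ‖ ≤
          ENNReal.ofReal (r * ε) * (∫⁻ ξ, dissipation d D ε (∫ η, f η) f ξ) +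
            ENNReal.ofReal (C * r ^ (-(d : ℝ)) * Real.exp (2 * CM / r ^ 2) *
                Real.sqrt (∫ η, f η)) *
              (∫⁻ ξ, dissipation d D ε (∫ η, f η) f ξ) ^ (1 / 2 : ℝ) :=
  pointwise_estimate_J_general d D hD
end

section
/- Let (X, μ) be a measure space and let f, g : X → [0,∞) be integrable functions with ∫_X f dμ = ∫_X g dμ. Then (∫_X |f − g| dμ)² ≤ (∫_X f dμ) · ∫_X (f − g)(log f − log g) dμ, where the integrand (f − g)(log f − log g) is nonnegative (interpreted as +∞ where exactly one of f, g vanishes, and 0 where f = g), and the inequality holds in [0,∞]. -/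
open MeasureTheory
open scoped ENNReal Classical

/-! By Cauchy–Schwarz with weight the arithmetic mean `(f + g) / 2`, whose integral is `∫ f`,
`(∫ |f - g|)² ≤ (∫ f) · ∫ 2 (f - g)² / (f + g)`. Pointwise `2 (a - b)² / (a + b)` is at most
`(a - b)(log a - log b)`, which is the inequality `2 (t - 1) / (t + 1) ≤ log t` for `t = a / b ≥ 1`
(the logarithmic mean is at most the arithmetic mean). -/

namespace Real

lemma two_mul_sub_div_add_le_log_sub_log {a b : ℝ} (hb : 0 < b) (hba : b ≤ a) :
    2 * (a - b) / (a + b) ≤ log a - log b := by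
  have h := le_log_one_add_of_nonneg (div_nonneg (sub_nonneg.2 hba) hb.le)
  have hratio : 1 + (a - b) / b = a / b := by field_simp; ring
  have hlhs : 2 * ((a - b) / b) / ((a - b) / b + 2) = 2 * (a - b) / (a + b) := by
    field_simp; ring
  rwa [hratio, hlhs, log_div (by linarith) hb.ne'] at h

lemma two_mul_sq_sub_div_add_le_mul_log_sub_log {a b : ℝ} (ha : 0 < a) (hb : 0 < b) :
    2 * (a - b) ^ 2 / (a + b) ≤ (a - b) * (log a - log b) := by
  wlog hba : b ≤ a generalizing a b
  · convert this hb ha (le_of_not_ge hba) using 1 <;> ring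
  calc 2 * (a - b) ^ 2 / (a + b) = (a - b) * (2 * (a - b) / (a + b)) := by ring
    _ ≤ (a - b) * (log a - log b) :=
      mul_le_mul_of_nonneg_left (two_mul_sub_div_add_le_log_sub_log hb hba) (sub_nonneg.2 hba)

end Real

lemma ofReal_two_mul_sq_sub_div_add_le {a b : ℝ} (ha : 0 ≤ a) (hb : 0 ≤ b) :
    ENNReal.ofReal (2 * (a - b) ^ 2 / (a + b)) ≤
      if (a = 0 ∧ b ≠ 0) ∨ (a ≠ 0 ∧ b = 0) then ∞
      else ENNReal.ofReal ((a - b) * (Real.log a - Real.log b)) := by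
  split_ifs with hzero
  · exact le_top
  · push Not at hzero
    rcases ha.eq_or_lt with rfl | ha
    · simp [hzero.1 rfl]
    · exact ENNReal.ofReal_le_ofReal <| Real.two_mul_sq_sub_div_add_le_mul_log_sub_log ha <|
        (hb.eq_or_lt.resolve_left fun h => hzero.2 ha.ne' h.symm)

lemma sq_sub_eq_two_mul_sq_sub_div_add_mul_half_add {a b : ℝ} (ha : 0 ≤ a) (hb : 0 ≤ b) :
    (a - b) ^ 2 = 2 * (a - b) ^ 2 / (a + b) * ((a + b) / 2) := by
  rcases (add_nonneg ha hb).eq_or_lt with hab | hab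
  · obtain ⟨rfl, rfl⟩ : a = 0 ∧ b = 0 := ⟨by linarith, by linarith⟩
    simp
  · field_simp

theorem MeasureTheory.lintegral_sq_le_mul_of_sq_le {α : Type*} [MeasurableSpace α]
    {μ : Measure α} {h F G : α → ℝ≥0∞} (hF : AEMeasurable F μ) (hG : AEMeasurable G μ)
    (hFG : ∀ᵐ x ∂μ, h x ^ 2 ≤ F x * G x) :
    (∫⁻ x, h x ∂μ) ^ 2 ≤ (∫⁻ x, F x ∂μ) * ∫⁻ x, G x ∂μ := by
  have hsqrt : ∀ a : ℝ≥0∞, (a ^ (1 / 2 : ℝ)) ^ 2 = a := fun a => by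
    rw [← ENNReal.rpow_natCast, ← ENNReal.rpow_mul]; norm_num
  have hle : ∫⁻ x, h x ∂μ ≤ ∫⁻ x, F x ^ (1 / 2 : ℝ) * G x ^ (1 / 2 : ℝ) ∂μ := by
    refine lintegral_mono_ae (hFG.mono fun x hx => ?_)
    calc h x = (h x ^ 2) ^ (1 / 2 : ℝ) := by
          rw [← ENNReal.rpow_natCast, ← ENNReal.rpow_mul]; norm_num
      _ ≤ (F x * G x) ^ (1 / 2 : ℝ) := ENNReal.rpow_le_rpow hx (by norm_num)
      _ = F x ^ (1 / 2 : ℝ) * G x ^ (1 / 2 : ℝ) := ENNReal.mul_rpow_of_nonneg _ _ (by norm_num)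
  calc (∫⁻ x, h x ∂μ) ^ 2
      ≤ ((∫⁻ x, F x ∂μ) ^ (1 / 2 : ℝ) * (∫⁻ x, G x ∂μ) ^ (1 / 2 : ℝ)) ^ 2 := by
        gcongr
        exact hle.trans (ENNReal.lintegral_mul_norm_pow_le hF hG (by norm_num) (by norm_num)
          (by norm_num))
    _ = (∫⁻ x, F x ∂μ) * ∫⁻ x, G x ∂μ := by rw [mul_pow, hsqrt, hsqrt]

/-- Csiszár–Kullback variant: for nonnegative integrable `f, g` on a measure
space with equal integrals, `(∫ |f − g|)² ≤ (∫ f) · ∫ (f − g)(log f − log g)`, where the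
integrand on the right is `[0,∞]`-valued: `+∞` where exactly one of `f, g` vanishes, and
given by the formula elsewhere (in particular `0` where `f = g`). -/
theorem csiszar_kullback_variant {X : Type*} [MeasurableSpace X] (μ : Measure X)
    (f g : X → ℝ) (hf0 : ∀ x, 0 ≤ f x) (hg0 : ∀ x, 0 ≤ g x)
    (hf : Integrable f μ) (hg : Integrable g μ)
    (heq : ∫ x, f x ∂μ = ∫ x, g x ∂μ) :
    ENNReal.ofReal ((∫ x, |f x - g x| ∂μ) ^ 2) ≤
      ENNReal.ofReal (∫ x, f x ∂μ) *
        ∫⁻ x, (if (f x = 0 ∧ g x ≠ 0) ∨ (f x ≠ 0 ∧ g x = 0) then (⊤ : ℝ≥0∞)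
          else ENNReal.ofReal ((f x - g x) * (Real.log (f x) - Real.log (g x)))) ∂μ := by
  have hfm := hf.aemeasurable
  have hgm := hg.aemeasurable
  have habs : ENNReal.ofReal (∫ x, |f x - g x| ∂μ) = ∫⁻ x, ENNReal.ofReal |f x - g x| ∂μ :=
    ofReal_integral_eq_lintegral_ofReal (hf.sub hg).abs (ae_of_all _ fun x => abs_nonneg _)
  have hmean : ∫⁻ x, ENNReal.ofReal ((f x + g x) / 2) ∂μ = ENNReal.ofReal (∫ x, f x ∂μ) := by
    have hmean_int : Integrable (fun x => (f x + g x) / 2) μ := (hf.add hg).div_const 2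
    rw [← ofReal_integral_eq_lintegral_ofReal hmean_int
      (ae_of_all _ fun x => by simp only [Pi.zero_apply]; linarith [hf0 x, hg0 x]), integral_div,
      integral_add hf hg, heq, add_self_div_two]
  have hsq : ∀ x, ENNReal.ofReal |f x - g x| ^ 2 ≤
      ENNReal.ofReal (2 * (f x - g x) ^ 2 / (f x + g x)) * ENNReal.ofReal ((f x + g x) / 2) := by
    intro x
    rw [← ENNReal.ofReal_pow (abs_nonneg _), sq_abs, ← ENNReal.ofReal_mul
      (div_nonneg (by positivity) (add_nonneg (hf0 x) (hg0 x))),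
      ← sq_sub_eq_two_mul_sq_sub_div_add_mul_half_add (hf0 x) (hg0 x)]
  calc ENNReal.ofReal ((∫ x, |f x - g x| ∂μ) ^ 2)
      = (∫⁻ x, ENNReal.ofReal |f x - g x| ∂μ) ^ 2 := by
        rw [ENNReal.ofReal_pow (integral_nonneg fun x => abs_nonneg _), habs]
    _ ≤ (∫⁻ x, ENNReal.ofReal (2 * (f x - g x) ^ 2 / (f x + g x)) ∂μ) *
          ∫⁻ x, ENNReal.ofReal ((f x + g x) / 2) ∂μ :=
        lintegral_sq_le_mul_of_sq_le (by fun_prop) (by fun_prop) (ae_of_all _ hsq)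
    _ ≤ _ := by
        rw [hmean, mul_comm]
        gcongr with x
        exact ofReal_two_mul_sq_sub_div_add_le (hf0 x) (hg0 x)
end

section
/- Let T > 0, d ≥ 1, and let (f_n) be a sequence of measurable functions f_n : (0,T) × ℝ^d × ℝ^d → [0,∞) such that sup_n ∫∫∫ f_n dt dx dξ < ∞ and sup_n ∫∫∫ f_n |log f_n| dt dx dξ < ∞. Let ψ : ℝ^d → ℝ be a smooth compactly supported function. Suppose that for every ν > 0 and every ε > 0 there exists δ = δ(ν,ε) > 0 such that for all n and all y ∈ ℝ^d with |y| ≤ δ, ∫₀^T ∫_{ℝ^d} | ∫_{ℝ^d} (β_ν(f_n(t, x+y, ξ)) − β_ν(f_n(t, x, ξ))) ψ(ξ) dξ | dx dt ≤ ε. Then for every ε > 0 there exists δ = δ(ε) > 0 such that for all n and all y with |y| ≤ δ, ∫₀^T ∫_{ℝ^d} | ∫_{ℝ^d} (f_n(t, x+y, ξ) − f_n(t, x, ξ)) ψ(ξ) dξ | dx dt ≤ ε. -/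
open MeasureTheory
open scoped ENNReal

/-- `β_ν(s) = s / (1 + ν s)`. -/
noncomputable def betaNu (ν s : ℝ) : ℝ := s / (1 + ν * s)

lemma betaNu_nonneg {ν s : ℝ} (hν : 0 < ν) (hs : 0 ≤ s) : 0 ≤ betaNu ν s := by
  unfold betaNu; positivity

lemma betaNu_le {ν s : ℝ} (hν : 0 < ν) (hs : 0 ≤ s) : betaNu ν s ≤ s := by
  unfold betaNu
  rw [div_le_iff₀ (by nlinarith)]
  nlinarith [mul_nonneg (mul_nonneg hν.le hs) hs]

lemma betaNu_meas (ν : ℝ) : Measurable (betaNu ν) := by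
  unfold betaNu
  exact measurable_id.div ((measurable_const.mul measurable_id).const_add 1)

lemma key_pointwise {ν s K : ℝ} (hν : 0 < ν) (hs : 0 ≤ s) (hK : 1 ≤ K) :
    s - betaNu ν s ≤ ν * Real.exp K * s + 1 / K * (s * |Real.log s|) := by
  have hden : (0:ℝ) < 1 + ν * s := by nlinarith
  have heq : s - betaNu ν s = ν * s ^ 2 / (1 + ν * s) := by
    unfold betaNu; field_simp; ring
  rcases le_or_gt s (Real.exp K) with h | h
  · have h1 : s - betaNu ν s ≤ ν * Real.exp K * s := by
      rw [heq, div_le_iff₀ hden]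
      nlinarith [mul_le_mul_of_nonneg_left h (mul_nonneg hν.le hs),
        mul_nonneg (mul_nonneg (mul_nonneg hν.le (Real.exp_pos K).le) hs) (mul_nonneg hν.le hs)]
    have h2 : 0 ≤ 1 / K * (s * |Real.log s|) := by positivity
    linarith
  · have hlog : K ≤ Real.log s := by
      rw [← Real.log_exp K]; exact Real.log_le_log (Real.exp_pos K) h.le
    have habs : |Real.log s| = Real.log s := abs_of_nonneg (by linarith)
    have h1 : s - betaNu ν s ≤ s := by
      rw [heq, div_le_iff₀ hden]; nlinarith
    have hK0 : (0:ℝ) < K := by linarith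
    have h2 : s ≤ 1 / K * (s * |Real.log s|) := by
      rw [habs, one_div, le_inv_mul_iff₀ hK0]
      nlinarith
    nlinarith [mul_nonneg (mul_nonneg hν.le (Real.exp_pos K).le) hs]

lemma ofReal_int_le {α : Type*} [MeasurableSpace α] (μ : Measure α) (f : α → ℝ)
    (hf : ∀ x, 0 ≤ f x) :
    ENNReal.ofReal (∫ x, f x ∂μ) ≤ ∫⁻ x, ENNReal.ofReal (f x) ∂μ := by
  by_cases h : Integrable f μ
  · rw [← ofReal_integral_eq_lintegral_ofReal h (ae_of_all _ hf)]
  · rw [integral_undef h]; simp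

lemma integrable_mul_bdd {α : Type*} [MeasurableSpace α] {μ : Measure α} {f g : α → ℝ}
    (hf : Integrable f μ) (hg : AEStronglyMeasurable g μ) (C : ℝ) (hC : ∀ x, |g x| ≤ C) :
    Integrable (fun x => f x * g x) μ := by
  have := hf.bdd_mul hg (c := C) (ae_of_all _ (by simpa using hC))
  simpa [mul_comm] using this

set_option maxHeartbeats 2000000 in
/-- compactness of `β_ν(f_n)` implies compactness of `f_n`: if `(f_n)` are
nonnegative with `∫∫∫ f_n` and `∫∫∫ f_n |log f_n|` uniformly bounded, `ψ` is smooth and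
compactly supported, and for all `ν, ε > 0` there is `δ > 0` such that the averaged
translates of `β_ν(f_n)` against `ψ` are within `ε` in `L¹_{t,x}` for `|y| ≤ δ` uniformly
in `n`, then the same equicontinuity property holds for `f_n` itself. -/
theorem compactness_beta_implies_compactness (T : ℝ) (hT : 0 < T) (d : ℕ) (hd : 1 ≤ d)
    (f : ℕ → ℝ → EuclideanSpace ℝ (Fin d) → EuclideanSpace ℝ (Fin d) → ℝ)
    (hmeas : ∀ n, Measurable (fun p : ℝ × EuclideanSpace ℝ (Fin d) × EuclideanSpace ℝ (Fin d) =>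
      f n p.1 p.2.1 p.2.2))
    (hpos : ∀ n t x ξ, 0 ≤ f n t x ξ)
    (hbound1 : (⨆ n, ∫⁻ t in Set.Ioo 0 T, ∫⁻ x, ∫⁻ ξ, ENNReal.ofReal (f n t x ξ)) < ⊤)
    (hbound2 : (⨆ n, ∫⁻ t in Set.Ioo 0 T, ∫⁻ x, ∫⁻ ξ,
      ENNReal.ofReal (f n t x ξ * |Real.log (f n t x ξ)|)) < ⊤)
    (ψ : EuclideanSpace ℝ (Fin d) → ℝ)
    (hψ : ContDiff ℝ (⊤ : ℕ∞) ψ) (hψsupp : HasCompactSupport ψ)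
    (hhyp : ∀ ν > (0 : ℝ), ∀ ε > (0 : ℝ), ∃ δ > (0 : ℝ), ∀ n, ∀ y : EuclideanSpace ℝ (Fin d),
      ‖y‖ ≤ δ →
        (∫⁻ t in Set.Ioo 0 T, ∫⁻ x, ENNReal.ofReal
            |∫ ξ, (betaNu ν (f n t (x + y) ξ) - betaNu ν (f n t x ξ)) * ψ ξ|) ≤
          ENNReal.ofReal ε) :
    ∀ ε > (0 : ℝ), ∃ δ > (0 : ℝ), ∀ n, ∀ y : EuclideanSpace ℝ (Fin d), ‖y‖ ≤ δ →
      (∫⁻ t in Set.Ioo 0 T, ∫⁻ x, ENNReal.ofReal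
          |∫ ξ, (f n t (x + y) ξ - f n t x ξ) * ψ ξ|) ≤ ENNReal.ofReal ε := by
  classical
  intro ε hε
  -- bound for ψ
  obtain ⟨C0, hC0⟩ := hψsupp.exists_bound_of_continuous hψ.continuous
  set Cψ : ℝ := max C0 0 with hCψdef
  have hCψ0 : 0 ≤ Cψ := le_max_right _ _
  have hCψ : ∀ ξ, |ψ ξ| ≤ Cψ := fun ξ =>
    le_trans (by simpa [Real.norm_eq_abs] using hC0 ξ) (le_max_left _ _)
  set c : ℝ≥0∞ := ENNReal.ofReal Cψ with hcdef
  -- constants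
  set C1 : ℝ≥0∞ := ⨆ n, ∫⁻ t in Set.Ioo 0 T, ∫⁻ x, ∫⁻ ξ, ENNReal.ofReal (f n t x ξ) with hC1def
  set C2 : ℝ≥0∞ := ⨆ n, ∫⁻ t in Set.Ioo 0 T, ∫⁻ x, ∫⁻ ξ,
      ENNReal.ofReal (f n t x ξ * |Real.log (f n t x ξ)|) with hC2def
  have hC1top : C1 ≠ ⊤ := hbound1.ne
  have hC2top : C2 ≠ ⊤ := hbound2.ne
  -- choose parameters
  set η : ℝ := ε / (6 * (Cψ + 1)) with hηdef
  have hη : 0 < η := by positivity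
  set K : ℝ := max 1 (C2.toReal / η) with hKdef
  have hK1 : (1:ℝ) ≤ K := le_max_left _ _
  have hK0 : (0:ℝ) < K := lt_of_lt_of_le one_pos hK1
  set ν : ℝ := η / (Real.exp K * (C1.toReal + 1)) with hνdef
  have hC1r : (0:ℝ) ≤ C1.toReal := ENNReal.toReal_nonneg
  have hν : 0 < ν := by positivity
  obtain ⟨δ, hδpos, hδ⟩ := hhyp ν hν (ε / 3) (by positivity)
  refine ⟨δ, hδpos, fun n y hy => ?_⟩
  -- measurability facts
  have hF : Measurable (fun p : ℝ × (EuclideanSpace ℝ (Fin d)) × (EuclideanSpace ℝ (Fin d)) => f n p.1 p.2.1 p.2.2) := hmeas n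
  have hFt : ∀ t, Measurable (fun q : (EuclideanSpace ℝ (Fin d)) × (EuclideanSpace ℝ (Fin d)) => f n t q.1 q.2) := fun t =>
    hF.comp (measurable_const.prodMk measurable_id)
  have hFtx : ∀ t x, Measurable (fun ξ : (EuclideanSpace ℝ (Fin d)) => f n t x ξ) := fun t x =>
    (hFt t).comp (measurable_const.prodMk measurable_id)
  -- the function g = f - β_ν f and related
  have hGt : ∀ t, Measurable (fun q : (EuclideanSpace ℝ (Fin d)) × (EuclideanSpace ℝ (Fin d)) =>
      ENNReal.ofReal (f n t q.1 q.2 - betaNu ν (f n t q.1 q.2))) := fun t =>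
    ((hFt t).sub ((betaNu_meas ν).comp (hFt t))).ennreal_ofReal
  -- φ t x = ∫⁻ ξ, ofReal (f - β f)
  set φ : ℝ → (EuclideanSpace ℝ (Fin d)) → ℝ≥0∞ := fun t x =>
    ∫⁻ ξ, ENNReal.ofReal (f n t x ξ - betaNu ν (f n t x ξ)) with hφdef
  have hφx : ∀ t, Measurable (φ t) := fun t => (hGt t).lintegral_prod_right'
  -- measurability of joint maps (ℝ × (EuclideanSpace ℝ (Fin d))) × (EuclideanSpace ℝ (Fin d)) → ℝ≥0∞
  have hmap : Measurable (fun p : (ℝ × (EuclideanSpace ℝ (Fin d))) × (EuclideanSpace ℝ (Fin d)) => f n p.1.1 p.1.2 p.2) :=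
    hF.comp ((measurable_fst.fst).prodMk ((measurable_fst.snd).prodMk measurable_snd))
  have hU1 : Measurable (fun p : ℝ × (EuclideanSpace ℝ (Fin d)) => ∫⁻ ξ, ENNReal.ofReal (f n p.1 p.2 ξ)) :=
    Measurable.lintegral_prod_right' hmap.ennreal_ofReal
  have hV1 : Measurable (fun p : ℝ × (EuclideanSpace ℝ (Fin d)) =>
      ∫⁻ ξ, ENNReal.ofReal (f n p.1 p.2 ξ * |Real.log (f n p.1 p.2 ξ)|)) :=
    Measurable.lintegral_prod_right'
      ((hmap.mul (Real.measurable_log.comp hmap).abs).ennreal_ofReal)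
  have hG1 : Measurable (fun p : ℝ × (EuclideanSpace ℝ (Fin d)) => φ p.1 p.2) :=
    Measurable.lintegral_prod_right'
      ((hmap.sub ((betaNu_meas ν).comp hmap)).ennreal_ofReal)
  have hU2 : Measurable (fun t => ∫⁻ x, ∫⁻ ξ, ENNReal.ofReal (f n t x ξ)) :=
    Measurable.lintegral_prod_right' hU1
  have hV2 : Measurable (fun t =>
      ∫⁻ x, ∫⁻ ξ, ENNReal.ofReal (f n t x ξ * |Real.log (f n t x ξ)|)) :=
    Measurable.lintegral_prod_right' hV1
  have hΦ : Measurable (fun t => ∫⁻ x, φ t x) := Measurable.lintegral_prod_right' hG1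
  -- a.e. finiteness in t
  have hfin : (∫⁻ t in Set.Ioo 0 T, ∫⁻ x, ∫⁻ ξ, ENNReal.ofReal (f n t x ξ)) ≠ ⊤ :=
    (lt_of_le_of_lt (le_iSup (fun m => ∫⁻ t in Set.Ioo 0 T, ∫⁻ x, ∫⁻ ξ,
      ENNReal.ofReal (f m t x ξ)) n) hbound1).ne
  have haet : ∀ᵐ t ∂(volume.restrict (Set.Ioo 0 T)),
      (∫⁻ x, ∫⁻ ξ, ENNReal.ofReal (f n t x ξ)) ≠ ⊤ :=
    (ae_lt_top hU2 hfin).mono fun t ht => ht.ne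
  -- MAIN a.e.-t bound
  have hmain : ∀ᵐ t ∂(volume.restrict (Set.Ioo 0 T)),
      (∫⁻ x, ENNReal.ofReal |∫ ξ, (f n t (x + y) ξ - f n t x ξ) * ψ ξ|) ≤
        (∫⁻ x, ENNReal.ofReal
            |∫ ξ, (betaNu ν (f n t (x + y) ξ) - betaNu ν (f n t x ξ)) * ψ ξ|) +
          ((∫⁻ x, φ t x) * c + (∫⁻ x, φ t x) * c) := by
    filter_upwards [haet] with t ht
    -- a.e.-x integrability
    have hx1 : ∀ᵐ x : (EuclideanSpace ℝ (Fin d)), (∫⁻ ξ, ENNReal.ofReal (f n t x ξ)) ≠ ⊤ := by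
      have hm : Measurable (fun x : (EuclideanSpace ℝ (Fin d)) => ∫⁻ ξ, ENNReal.ofReal (f n t x ξ)) :=
        hU1.comp (measurable_const.prodMk measurable_id)
      exact (ae_lt_top hm ht).mono fun x hx => hx.ne
    have hx2 : ∀ᵐ x : (EuclideanSpace ℝ (Fin d)), (∫⁻ ξ, ENNReal.ofReal (f n t (x + y) ξ)) ≠ ⊤ := by
      have hm : Measurable (fun x : (EuclideanSpace ℝ (Fin d)) => ∫⁻ ξ, ENNReal.ofReal (f n t x ξ)) :=
        hU1.comp (measurable_const.prodMk measurable_id)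
      have heq : (∫⁻ x, ∫⁻ ξ, ENNReal.ofReal (f n t (x + y) ξ)) =
          ∫⁻ x, ∫⁻ ξ, ENNReal.ofReal (f n t x ξ) :=
        lintegral_add_right_eq_self (fun x => ∫⁻ ξ, ENNReal.ofReal (f n t x ξ)) y
      have : (∫⁻ x, ∫⁻ ξ, ENNReal.ofReal (f n t (x + y) ξ)) ≠ ⊤ := by rw [heq]; exact ht
      exact (ae_lt_top (hm.comp (measurable_add_const y)) this).mono fun x hx => hx.ne
    -- pointwise-x bound
    have hxbound : ∀ᵐ x : (EuclideanSpace ℝ (Fin d)), ENNReal.ofReal |∫ ξ, (f n t (x + y) ξ - f n t x ξ) * ψ ξ| ≤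
        ENNReal.ofReal |∫ ξ, (betaNu ν (f n t (x + y) ξ) - betaNu ν (f n t x ξ)) * ψ ξ| +
          (φ t (x + y) * c + φ t x * c) := by
      filter_upwards [hx1, hx2] with x h1 h2
      have int0 : Integrable (fun ξ => f n t x ξ) := by
        refine ⟨(hFtx t x).aestronglyMeasurable, ?_⟩
        exact (hasFiniteIntegral_iff_ofReal (ae_of_all _ (hpos n t x))).2 h1.lt_top
      have int1 : Integrable (fun ξ => f n t (x + y) ξ) := by
        refine ⟨(hFtx t (x + y)).aestronglyMeasurable, ?_⟩
        exact (hasFiniteIntegral_iff_ofReal (ae_of_all _ (hpos n t (x + y)))).2 h2.lt_top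
      have intβ0 : Integrable (fun ξ => betaNu ν (f n t x ξ)) := by
        refine int0.mono ((betaNu_meas ν).comp (hFtx t x)).aestronglyMeasurable
          (ae_of_all _ fun ξ => ?_)
        rw [Real.norm_eq_abs, Real.norm_eq_abs,
          abs_of_nonneg (betaNu_nonneg hν (hpos n t x ξ)), abs_of_nonneg (hpos n t x ξ)]
        exact betaNu_le hν (hpos n t x ξ)
      have intβ1 : Integrable (fun ξ => betaNu ν (f n t (x + y) ξ)) := by
        refine int1.mono ((betaNu_meas ν).comp (hFtx t (x + y))).aestronglyMeasurable
          (ae_of_all _ fun ξ => ?_)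
        rw [Real.norm_eq_abs, Real.norm_eq_abs,
          abs_of_nonneg (betaNu_nonneg hν (hpos n t (x + y) ξ)),
          abs_of_nonneg (hpos n t (x + y) ξ)]
        exact betaNu_le hν (hpos n t (x + y) ξ)
      have hψm : AEStronglyMeasurable ψ (volume : Measure (EuclideanSpace ℝ (Fin d))) :=
        hψ.continuous.aestronglyMeasurable
      have intA : Integrable (fun ξ =>
          (betaNu ν (f n t (x + y) ξ) - betaNu ν (f n t x ξ)) * ψ ξ) :=
        integrable_mul_bdd (intβ1.sub intβ0) hψm Cψ hCψ
      have intB : Integrable (fun ξ =>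
          (f n t (x + y) ξ - betaNu ν (f n t (x + y) ξ)) * ψ ξ) :=
        integrable_mul_bdd (int1.sub intβ1) hψm Cψ hCψ
      have intC : Integrable (fun ξ => (f n t x ξ - betaNu ν (f n t x ξ)) * ψ ξ) :=
        integrable_mul_bdd (int0.sub intβ0) hψm Cψ hCψ
      -- decompose the integral
      have hsplit : (∫ ξ, (f n t (x + y) ξ - f n t x ξ) * ψ ξ) =
          (∫ ξ, (betaNu ν (f n t (x + y) ξ) - betaNu ν (f n t x ξ)) * ψ ξ) +
            ((∫ ξ, (f n t (x + y) ξ - betaNu ν (f n t (x + y) ξ)) * ψ ξ) -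
              (∫ ξ, (f n t x ξ - betaNu ν (f n t x ξ)) * ψ ξ)) := by
        have intBC : Integrable (fun ξ =>
            (f n t (x + y) ξ - betaNu ν (f n t (x + y) ξ)) * ψ ξ -
              (f n t x ξ - betaNu ν (f n t x ξ)) * ψ ξ) := intB.sub intC
        rw [← integral_sub intB intC, ← integral_add intA intBC]
        congr 1; funext ξ; ring
      -- bound each remainder term
      have hB : ENNReal.ofReal |∫ ξ, (f n t (x + y) ξ - betaNu ν (f n t (x + y) ξ)) * ψ ξ| ≤
          φ t (x + y) * c := by
        have habs : |∫ ξ, (f n t (x + y) ξ - betaNu ν (f n t (x + y) ξ)) * ψ ξ| ≤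
            ∫ ξ, (f n t (x + y) ξ - betaNu ν (f n t (x + y) ξ)) * |ψ ξ| := by
          have h1 : |∫ ξ, (f n t (x + y) ξ - betaNu ν (f n t (x + y) ξ)) * ψ ξ| ≤
              ∫ ξ, |(f n t (x + y) ξ - betaNu ν (f n t (x + y) ξ)) * ψ ξ| := by
            simpa only [Real.norm_eq_abs] using norm_integral_le_integral_norm
              (μ := volume) (fun ξ => (f n t (x + y) ξ - betaNu ν (f n t (x + y) ξ)) * ψ ξ)
          have h2 : (∫ ξ, |(f n t (x + y) ξ - betaNu ν (f n t (x + y) ξ)) * ψ ξ|) =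
              ∫ ξ, (f n t (x + y) ξ - betaNu ν (f n t (x + y) ξ)) * |ψ ξ| := by
            congr 1; funext ξ
            rw [abs_mul, abs_of_nonneg (by
              have := betaNu_le hν (hpos n t (x + y) ξ); linarith)]
          rw [h2] at h1; exact h1
        calc ENNReal.ofReal |∫ ξ, (f n t (x + y) ξ - betaNu ν (f n t (x + y) ξ)) * ψ ξ|
            ≤ ENNReal.ofReal (∫ ξ, (f n t (x + y) ξ - betaNu ν (f n t (x + y) ξ)) * |ψ ξ|) :=
              ENNReal.ofReal_le_ofReal habs
          _ ≤ ∫⁻ ξ, ENNReal.ofReal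
              ((f n t (x + y) ξ - betaNu ν (f n t (x + y) ξ)) * |ψ ξ|) :=
              ofReal_int_le _ _ (fun ξ => mul_nonneg (by
                have := betaNu_le hν (hpos n t (x + y) ξ); linarith) (abs_nonneg _))
          _ ≤ ∫⁻ ξ, ENNReal.ofReal (f n t (x + y) ξ - betaNu ν (f n t (x + y) ξ)) * c := by
              refine lintegral_mono fun ξ => ?_
              rw [hcdef, ← ENNReal.ofReal_mul (by
                have := betaNu_le hν (hpos n t (x + y) ξ); linarith)]
              exact ENNReal.ofReal_le_ofReal (mul_le_mul_of_nonneg_left (hCψ ξ) (by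
                have := betaNu_le hν (hpos n t (x + y) ξ); linarith))
          _ = φ t (x + y) * c := lintegral_mul_const c
              (((hFtx t (x + y)).sub
                ((betaNu_meas ν).comp (hFtx t (x + y)))).ennreal_ofReal)
      have hC : ENNReal.ofReal |∫ ξ, (f n t x ξ - betaNu ν (f n t x ξ)) * ψ ξ| ≤
          φ t x * c := by
        have habs : |∫ ξ, (f n t x ξ - betaNu ν (f n t x ξ)) * ψ ξ| ≤
            ∫ ξ, (f n t x ξ - betaNu ν (f n t x ξ)) * |ψ ξ| := by
          have h1 : |∫ ξ, (f n t x ξ - betaNu ν (f n t x ξ)) * ψ ξ| ≤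
              ∫ ξ, |(f n t x ξ - betaNu ν (f n t x ξ)) * ψ ξ| := by
            simpa only [Real.norm_eq_abs] using norm_integral_le_integral_norm
              (μ := volume) (fun ξ => (f n t x ξ - betaNu ν (f n t x ξ)) * ψ ξ)
          have h2 : (∫ ξ, |(f n t x ξ - betaNu ν (f n t x ξ)) * ψ ξ|) =
              ∫ ξ, (f n t x ξ - betaNu ν (f n t x ξ)) * |ψ ξ| := by
            congr 1; funext ξ
            rw [abs_mul, abs_of_nonneg (by
              have := betaNu_le hν (hpos n t x ξ); linarith)]
          rw [h2] at h1; exact h1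
        calc ENNReal.ofReal |∫ ξ, (f n t x ξ - betaNu ν (f n t x ξ)) * ψ ξ|
            ≤ ENNReal.ofReal (∫ ξ, (f n t x ξ - betaNu ν (f n t x ξ)) * |ψ ξ|) :=
              ENNReal.ofReal_le_ofReal habs
          _ ≤ ∫⁻ ξ, ENNReal.ofReal ((f n t x ξ - betaNu ν (f n t x ξ)) * |ψ ξ|) :=
              ofReal_int_le _ _ (fun ξ => mul_nonneg (by
                have := betaNu_le hν (hpos n t x ξ); linarith) (abs_nonneg _))
          _ ≤ ∫⁻ ξ, ENNReal.ofReal (f n t x ξ - betaNu ν (f n t x ξ)) * c := by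
              refine lintegral_mono fun ξ => ?_
              rw [hcdef, ← ENNReal.ofReal_mul (by
                have := betaNu_le hν (hpos n t x ξ); linarith)]
              exact ENNReal.ofReal_le_ofReal (mul_le_mul_of_nonneg_left (hCψ ξ) (by
                have := betaNu_le hν (hpos n t x ξ); linarith))
          _ = φ t x * c := lintegral_mul_const c
              (((hFtx t x).sub ((betaNu_meas ν).comp (hFtx t x))).ennreal_ofReal)
      calc ENNReal.ofReal |∫ ξ, (f n t (x + y) ξ - f n t x ξ) * ψ ξ|
          ≤ ENNReal.ofReal
              (|∫ ξ, (betaNu ν (f n t (x + y) ξ) - betaNu ν (f n t x ξ)) * ψ ξ| +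
                (|∫ ξ, (f n t (x + y) ξ - betaNu ν (f n t (x + y) ξ)) * ψ ξ| +
                  |∫ ξ, (f n t x ξ - betaNu ν (f n t x ξ)) * ψ ξ|)) := by
            refine ENNReal.ofReal_le_ofReal ?_
            rw [hsplit]
            exact le_trans (abs_add_le _ _) (by
              gcongr
              exact abs_sub _ _)
        _ ≤ ENNReal.ofReal
              |∫ ξ, (betaNu ν (f n t (x + y) ξ) - betaNu ν (f n t x ξ)) * ψ ξ| +
              (ENNReal.ofReal |∫ ξ, (f n t (x + y) ξ - betaNu ν (f n t (x + y) ξ)) * ψ ξ| +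
                ENNReal.ofReal |∫ ξ, (f n t x ξ - betaNu ν (f n t x ξ)) * ψ ξ|) :=
            le_trans ENNReal.ofReal_add_le (by gcongr; exact ENNReal.ofReal_add_le)
        _ ≤ ENNReal.ofReal
              |∫ ξ, (betaNu ν (f n t (x + y) ξ) - betaNu ν (f n t x ξ)) * ψ ξ| +
              (φ t (x + y) * c + φ t x * c) := by gcongr
    -- integrate the pointwise bound in x
    calc (∫⁻ x, ENNReal.ofReal |∫ ξ, (f n t (x + y) ξ - f n t x ξ) * ψ ξ|)
        ≤ ∫⁻ x, (ENNReal.ofReal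
            |∫ ξ, (betaNu ν (f n t (x + y) ξ) - betaNu ν (f n t x ξ)) * ψ ξ| +
            (φ t (x + y) * c + φ t x * c)) := lintegral_mono_ae hxbound
      _ = (∫⁻ x, ENNReal.ofReal
            |∫ ξ, (betaNu ν (f n t (x + y) ξ) - betaNu ν (f n t x ξ)) * ψ ξ|) +
          ∫⁻ x, (φ t (x + y) * c + φ t x * c) := by
          refine lintegral_add_right _ ?_
          exact (((hφx t).comp (measurable_add_const y)).mul_const c).add
            ((hφx t).mul_const c)
      _ = (∫⁻ x, ENNReal.ofReal
            |∫ ξ, (betaNu ν (f n t (x + y) ξ) - betaNu ν (f n t x ξ)) * ψ ξ|) +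
          ((∫⁻ x, φ t x) * c + (∫⁻ x, φ t x) * c) := by
          congr 1
          have hm1 : Measurable (fun x => φ t (x + y) * c) := by
            exact ((hφx t).comp (measurable_add_const y)).mul_const c
          rw [lintegral_add_left hm1]
          congr 1
          · have := lintegral_add_right_eq_self (μ := (volume : Measure (EuclideanSpace ℝ (Fin d)))) (fun x => φ t x * c) y
            rw [this]
            exact lintegral_mul_const c (hφx t)
          · exact lintegral_mul_const c (hφx t)
  -- bound for J := triple integral of f - β f
  have hJ : (∫⁻ t in Set.Ioo 0 T, ∫⁻ x, φ t x) ≤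
      ENNReal.ofReal η + ENNReal.ofReal η := by
    set a : ℝ≥0∞ := ENNReal.ofReal (ν * Real.exp K) with hadef
    set b : ℝ≥0∞ := ENNReal.ofReal (1 / K) with hbdef
    have hpoint : ∀ t x ξ, ENNReal.ofReal (f n t x ξ - betaNu ν (f n t x ξ)) ≤
        a * ENNReal.ofReal (f n t x ξ) +
          b * ENNReal.ofReal (f n t x ξ * |Real.log (f n t x ξ)|) := by
      intro t x ξ
      calc ENNReal.ofReal (f n t x ξ - betaNu ν (f n t x ξ))
          ≤ ENNReal.ofReal (ν * Real.exp K * f n t x ξ +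
              1 / K * (f n t x ξ * |Real.log (f n t x ξ)|)) :=
            ENNReal.ofReal_le_ofReal (key_pointwise hν (hpos n t x ξ) hK1)
        _ ≤ ENNReal.ofReal (ν * Real.exp K * f n t x ξ) +
            ENNReal.ofReal (1 / K * (f n t x ξ * |Real.log (f n t x ξ)|)) :=
            ENNReal.ofReal_add_le
        _ = a * ENNReal.ofReal (f n t x ξ) +
            b * ENNReal.ofReal (f n t x ξ * |Real.log (f n t x ξ)|) := by
            rw [hadef, hbdef,
              ← ENNReal.ofReal_mul (show (0:ℝ) ≤ ν * Real.exp K by positivity),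
              ← ENNReal.ofReal_mul (show (0:ℝ) ≤ 1 / K by positivity)]
    have hξ : ∀ t x, φ t x ≤
        a * (∫⁻ ξ, ENNReal.ofReal (f n t x ξ)) +
          b * ∫⁻ ξ, ENNReal.ofReal (f n t x ξ * |Real.log (f n t x ξ)|) := by
      intro t x
      have hmea1 : Measurable (fun ξ : (EuclideanSpace ℝ (Fin d)) => ENNReal.ofReal (f n t x ξ)) :=
        (hFtx t x).ennreal_ofReal
      have hmea2 : Measurable (fun ξ : (EuclideanSpace ℝ (Fin d)) =>
          ENNReal.ofReal (f n t x ξ * |Real.log (f n t x ξ)|)) :=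
        ((hFtx t x).mul (Real.measurable_log.comp (hFtx t x)).abs).ennreal_ofReal
      calc φ t x ≤ ∫⁻ ξ, (a * ENNReal.ofReal (f n t x ξ) +
            b * ENNReal.ofReal (f n t x ξ * |Real.log (f n t x ξ)|)) :=
            lintegral_mono fun ξ => hpoint t x ξ
        _ = a * (∫⁻ ξ, ENNReal.ofReal (f n t x ξ)) +
            b * ∫⁻ ξ, ENNReal.ofReal (f n t x ξ * |Real.log (f n t x ξ)|) := by
            rw [lintegral_add_left (hmea1.const_mul a), lintegral_const_mul a hmea1,
              lintegral_const_mul b hmea2]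
    have hxlev : ∀ t, (∫⁻ x, φ t x) ≤
        a * (∫⁻ x, ∫⁻ ξ, ENNReal.ofReal (f n t x ξ)) +
          b * ∫⁻ x, ∫⁻ ξ, ENNReal.ofReal (f n t x ξ * |Real.log (f n t x ξ)|) := by
      intro t
      have hm1 : Measurable (fun x : (EuclideanSpace ℝ (Fin d)) => ∫⁻ ξ, ENNReal.ofReal (f n t x ξ)) :=
        hU1.comp (measurable_const.prodMk measurable_id)
      have hm2 : Measurable (fun x : (EuclideanSpace ℝ (Fin d)) =>
          ∫⁻ ξ, ENNReal.ofReal (f n t x ξ * |Real.log (f n t x ξ)|)) :=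
        hV1.comp (measurable_const.prodMk measurable_id)
      calc (∫⁻ x, φ t x) ≤ ∫⁻ x, (a * (∫⁻ ξ, ENNReal.ofReal (f n t x ξ)) +
            b * ∫⁻ ξ, ENNReal.ofReal (f n t x ξ * |Real.log (f n t x ξ)|)) :=
            lintegral_mono fun x => hξ t x
        _ = a * (∫⁻ x, ∫⁻ ξ, ENNReal.ofReal (f n t x ξ)) +
            b * ∫⁻ x, ∫⁻ ξ, ENNReal.ofReal (f n t x ξ * |Real.log (f n t x ξ)|) := by
            rw [lintegral_add_left (hm1.const_mul a), lintegral_const_mul a hm1,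
              lintegral_const_mul b hm2]
    have htlev : (∫⁻ t in Set.Ioo 0 T, ∫⁻ x, φ t x) ≤ a * C1 + b * C2 := by
      calc (∫⁻ t in Set.Ioo 0 T, ∫⁻ x, φ t x)
          ≤ ∫⁻ t in Set.Ioo 0 T,
              (a * (∫⁻ x, ∫⁻ ξ, ENNReal.ofReal (f n t x ξ)) +
                b * ∫⁻ x, ∫⁻ ξ, ENNReal.ofReal (f n t x ξ * |Real.log (f n t x ξ)|)) :=
            lintegral_mono fun t => hxlev t
        _ = a * (∫⁻ t in Set.Ioo 0 T, ∫⁻ x, ∫⁻ ξ, ENNReal.ofReal (f n t x ξ)) +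
            b * ∫⁻ t in Set.Ioo 0 T, ∫⁻ x, ∫⁻ ξ,
              ENNReal.ofReal (f n t x ξ * |Real.log (f n t x ξ)|) := by
            rw [lintegral_add_left (hU2.const_mul a), lintegral_const_mul a hU2,
              lintegral_const_mul b hV2]
        _ ≤ a * C1 + b * C2 := by
            gcongr
            · exact le_iSup (fun m => ∫⁻ t in Set.Ioo 0 T, ∫⁻ x, ∫⁻ ξ,
                ENNReal.ofReal (f m t x ξ)) n
            · exact le_iSup (fun m => ∫⁻ t in Set.Ioo 0 T, ∫⁻ x, ∫⁻ ξ,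
                ENNReal.ofReal (f m t x ξ * |Real.log (f m t x ξ)|)) n
    refine le_trans htlev ?_
    have ha : a * C1 ≤ ENNReal.ofReal η := by
      rw [hadef, ← ENNReal.ofReal_toReal hC1top, ← ENNReal.ofReal_mul (by positivity)]
      refine ENNReal.ofReal_le_ofReal ?_
      rw [hνdef]
      rw [div_mul_eq_mul_div, div_mul_eq_mul_div, div_le_iff₀ (by positivity)]
      nlinarith [Real.exp_pos K, hη.le, hC1r]
    have hb : b * C2 ≤ ENNReal.ofReal η := by
      rw [hbdef, ← ENNReal.ofReal_toReal hC2top, ← ENNReal.ofReal_mul (by positivity)]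
      refine ENNReal.ofReal_le_ofReal ?_
      rw [one_div, inv_mul_le_iff₀ hK0]
      have : C2.toReal / η ≤ K := le_max_right _ _
      rw [div_le_iff₀ hη] at this
      linarith
    exact add_le_add ha hb
  -- put everything together
  calc (∫⁻ t in Set.Ioo 0 T, ∫⁻ x, ENNReal.ofReal
        |∫ ξ, (f n t (x + y) ξ - f n t x ξ) * ψ ξ|)
      ≤ ∫⁻ t in Set.Ioo 0 T,
          ((∫⁻ x, ENNReal.ofReal
            |∫ ξ, (betaNu ν (f n t (x + y) ξ) - betaNu ν (f n t x ξ)) * ψ ξ|) +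
            ((∫⁻ x, φ t x) * c + (∫⁻ x, φ t x) * c)) := lintegral_mono_ae hmain
    _ = (∫⁻ t in Set.Ioo 0 T, ∫⁻ x, ENNReal.ofReal
          |∫ ξ, (betaNu ν (f n t (x + y) ξ) - betaNu ν (f n t x ξ)) * ψ ξ|) +
        ((∫⁻ t in Set.Ioo 0 T, ∫⁻ x, φ t x) * c +
          (∫⁻ t in Set.Ioo 0 T, ∫⁻ x, φ t x) * c) := by
        rw [lintegral_add_right _ (show Measurable (fun t => (∫⁻ x, φ t x) * c + (∫⁻ x, φ t x) * c) from (hΦ.mul_const c).add (hΦ.mul_const c))]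
        congr 1
        rw [lintegral_add_left (hΦ.mul_const c), lintegral_mul_const c hΦ]
    _ ≤ ENNReal.ofReal (ε / 3) +
        ((ENNReal.ofReal η + ENNReal.ofReal η) * c +
          (ENNReal.ofReal η + ENNReal.ofReal η) * c) := by
        exact add_le_add (hδ n y hy)
          (add_le_add (mul_le_mul_left hJ c) (mul_le_mul_left hJ c))
    _ ≤ ENNReal.ofReal ε := by
        rw [hcdef, ← ENNReal.ofReal_add hη.le hη.le, ← ENNReal.ofReal_mul (by positivity),
          ← ENNReal.ofReal_add (by positivity) (by positivity),
          ← ENNReal.ofReal_add (by positivity) (by positivity)]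
        refine ENNReal.ofReal_le_ofReal ?_
        rw [hηdef]
        have h1 : (ε / (6 * (Cψ + 1)) + ε / (6 * (Cψ + 1))) * Cψ ≤ ε / 3 := by
          rw [← add_div, div_mul_eq_mul_div, div_le_div_iff₀ (by positivity)
            (by norm_num)]
          nlinarith [hε.le, hCψ0]
        linarith
end

section
/- Let T > 0, d ≥ 1, and let f : (0,T) × ℝ^d × ℝ^d → [0,∞) be measurable with ∫∫∫ f dt dx dξ < ∞ and ∫∫∫ f log₊ f dt dx dξ < ∞. Let ψ : ℝ^d → ℝ be a bounded measurable function with sup norm ‖ψ‖_∞. Then for every ν > 0 and every M ≥ e, ∫₀^T ∫_{ℝ^d} | ∫_{ℝ^d} (f(t,x,ξ) − β_ν(f(t,x,ξ))) ψ(ξ) dξ | dx dt ≤ ‖ψ‖_∞ ( ν M ∫∫∫ f dt dx dξ + (1/log M) ∫∫∫ f log₊ f dt dx dξ ). -/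
/-!
Pointwise, `s - β_ν(s) = ν s² / (1 + ν s)` is at most `ν M s` when `s ≤ M`, while for `s > M`
it is at most `s ≤ s log s / log M`. Integrating this bound against `|ψ| ≤ ‖ψ‖_∞`, first in `ξ`
and then in `x` and `t`, gives the estimate.
-/

open MeasureTheory
open scoped ENNReal

lemma betaNu_le_self {ν s : ℝ} (hν : 0 ≤ ν) (hs : 0 ≤ s) : betaNu ν s ≤ s :=
  div_le_self hs (le_add_of_nonneg_right (mul_nonneg hν hs))

lemma sub_betaNu_le {ν M s : ℝ} (hν : 0 ≤ ν) (hM : 1 < M) (hs : 0 ≤ s) :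
    s - betaNu ν s ≤ ν * M * s + 1 / Real.log M * (s * max (Real.log s) 0) := by
  have hlogM : 0 < Real.log M := Real.log_pos hM
  have hden : 1 ≤ 1 + ν * s := le_add_of_nonneg_right (mul_nonneg hν hs)
  rcases le_or_gt s M with hsM | hMs
  · have hsub : s - betaNu ν s = ν * s ^ 2 / (1 + ν * s) := by
      unfold betaNu
      field_simp
      ring
    have hquad : ν * s ^ 2 / (1 + ν * s) ≤ ν * M * s :=
      (div_le_self (by positivity) hden).trans (by nlinarith [mul_nonneg hν hs])
    have hlog : 0 ≤ 1 / Real.log M * (s * max (Real.log s) 0) := by positivity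
    linarith
  · have hlogs : Real.log M ≤ Real.log s := Real.log_le_log (by linarith) hMs.le
    have hs_le : s ≤ 1 / Real.log M * (s * Real.log s) := by
      rw [one_div_mul_eq_div, le_div_iff₀ hlogM]
      exact mul_le_mul_of_nonneg_left hlogs hs
    have hβ : 0 ≤ betaNu ν s := by unfold betaNu; positivity
    have hνMs : 0 ≤ ν * M * s := mul_nonneg (mul_nonneg hν (zero_lt_one.trans hM).le) hs
    rw [max_eq_left (hlogM.le.trans hlogs)]
    linarith

lemma ofReal_abs_sub_betaNu_mul_le {ν M s y C : ℝ} (hν : 0 ≤ ν) (hM : 1 < M) (hs : 0 ≤ s)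
    (hy : |y| ≤ C) :
    ENNReal.ofReal |(s - betaNu ν s) * y| ≤
      ENNReal.ofReal C * (ENNReal.ofReal (ν * M) * ENNReal.ofReal s +
        ENNReal.ofReal (1 / Real.log M) * ENNReal.ofReal (s * max (Real.log s) 0)) := by
  have hsub : 0 ≤ s - betaNu ν s := sub_nonneg.2 (betaNu_le_self hν hs)
  have hνM : 0 ≤ ν * M := mul_nonneg hν (zero_lt_one.trans hM).le
  have hlogM : 0 ≤ 1 / Real.log M := one_div_nonneg.2 (Real.log_pos hM).le
  have hsub_le : ENNReal.ofReal (s - betaNu ν s) ≤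
      ENNReal.ofReal (ν * M) * ENNReal.ofReal s +
        ENNReal.ofReal (1 / Real.log M) * ENNReal.ofReal (s * max (Real.log s) 0) := by
    rw [← ENNReal.ofReal_mul hνM, ← ENNReal.ofReal_mul hlogM,
      ← ENNReal.ofReal_add (by positivity) (by positivity)]
    exact ENNReal.ofReal_le_ofReal (sub_betaNu_le hν hM hs)
  rw [abs_mul, abs_of_nonneg hsub, ENNReal.ofReal_mul hsub, mul_comm]
  exact mul_le_mul' (ENNReal.ofReal_le_ofReal hy) hsub_le

section Lintegral

variable {α : Type*} [MeasurableSpace α] {μ : Measure α}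

lemma lintegral_le_const_mul_add_const_mul {F G H : α → ℝ≥0∞} (c a b : ℝ≥0∞)
    (hG : Measurable G) (hH : Measurable H) (hF : ∀ x, F x ≤ c * (a * G x + b * H x)) :
    ∫⁻ x, F x ∂μ ≤ c * (a * ∫⁻ x, G x ∂μ + b * ∫⁻ x, H x ∂μ) := by
  refine (lintegral_mono hF).trans_eq ?_
  rw [lintegral_const_mul c (by fun_prop),
    lintegral_add_left (hG.const_mul a), lintegral_const_mul a hG, lintegral_const_mul b hH]

lemma ofReal_abs_integral_le_lintegral (g : α → ℝ) :
    ENNReal.ofReal |∫ x, g x ∂μ| ≤ ∫⁻ x, ENNReal.ofReal |g x| ∂μ := by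
  simpa only [Real.enorm_eq_ofReal_abs] using enorm_integral_le_lintegral_enorm g

end Lintegral

section IteratedLintegral

variable {α β γ : Type*} [MeasurableSpace α] [MeasurableSpace β] [MeasurableSpace γ]
  {μ : Measure β} {ν : Measure γ} [SFinite μ] [SFinite ν] {F : α × β × γ → ℝ≥0∞}

lemma Measurable.lintegral_prod_right_assoc (hF : Measurable F) :
    Measurable fun p : α × β => ∫⁻ c, F (p.1, p.2, c) ∂ν :=
  (hF.comp MeasurableEquiv.prodAssoc.measurable).lintegral_prod_right'

lemma Measurable.lintegral_lintegral_prod_right (hF : Measurable F) :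
    Measurable fun a => ∫⁻ b, ∫⁻ c, F (a, b, c) ∂ν ∂μ :=
  hF.lintegral_prod_right_assoc.lintegral_prod_right'

end IteratedLintegral

theorem truncation_error_estimate_general (T : ℝ) (d : ℕ)
    (f : ℝ → EuclideanSpace ℝ (Fin d) → EuclideanSpace ℝ (Fin d) → ℝ)
    (hmeas : Measurable (fun p : ℝ × EuclideanSpace ℝ (Fin d) × EuclideanSpace ℝ (Fin d) =>
      f p.1 p.2.1 p.2.2))
    (hpos : ∀ t x ξ, 0 ≤ f t x ξ)
    (ψ : EuclideanSpace ℝ (Fin d) → ℝ)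
    (ψnorm : ℝ) (hψbound : ∀ ξ, |ψ ξ| ≤ ψnorm)
    (ν M : ℝ) (hν : 0 < ν) (hM : Real.exp 1 ≤ M) :
    (∫⁻ t in Set.Ioo 0 T, ∫⁻ x, ENNReal.ofReal
        |∫ ξ, (f t x ξ - betaNu ν (f t x ξ)) * ψ ξ|) ≤
      ENNReal.ofReal ψnorm *
        (ENNReal.ofReal (ν * M) * (∫⁻ t in Set.Ioo 0 T, ∫⁻ x, ∫⁻ ξ, ENNReal.ofReal (f t x ξ)) +
          ENNReal.ofReal (1 / Real.log M) * (∫⁻ t in Set.Ioo 0 T, ∫⁻ x, ∫⁻ ξ,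
            ENNReal.ofReal (f t x ξ * max (Real.log (f t x ξ)) 0))) := by
  have hM1 : 1 < M := (Real.one_lt_exp_iff.2 one_pos).trans_le hM
  have hF : Measurable fun p : ℝ × EuclideanSpace ℝ (Fin d) × EuclideanSpace ℝ (Fin d) =>
      ENNReal.ofReal (f p.1 p.2.1 p.2.2) := hmeas.ennreal_ofReal
  have hFlog : Measurable fun p : ℝ × EuclideanSpace ℝ (Fin d) × EuclideanSpace ℝ (Fin d) =>
      ENNReal.ofReal (f p.1 p.2.1 p.2.2 * max (Real.log (f p.1 p.2.1 p.2.2)) 0) :=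
    (hmeas.mul ((Real.measurable_log.comp hmeas).max measurable_const)).ennreal_ofReal
  refine lintegral_le_const_mul_add_const_mul _ _ _ hF.lintegral_lintegral_prod_right
    hFlog.lintegral_lintegral_prod_right fun t => ?_
  refine lintegral_le_const_mul_add_const_mul _ _ _
    (hF.lintegral_prod_right_assoc.comp measurable_prodMk_left)
    (hFlog.lintegral_prod_right_assoc.comp measurable_prodMk_left) fun x => ?_
  have hsection : Measurable fun ξ : EuclideanSpace ℝ (Fin d) => (t, x, ξ) :=
    measurable_const.prodMk (measurable_const.prodMk measurable_id)
  exact (ofReal_abs_integral_le_lintegral _).trans <|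
    lintegral_le_const_mul_add_const_mul _ _ _ (hF.comp hsection) (hFlog.comp hsection)
      fun ξ => ofReal_abs_sub_betaNu_mul_le hν.le hM1 (hpos t x ξ) (hψbound ξ)

/-- for nonnegative measurable `f` on `(0,T) × ℝ^d × ℝ^d` with finite
`∫∫∫ f` and `∫∫∫ f log₊ f`, a bounded measurable `ψ` with `|ψ| ≤ ‖ψ‖_∞`, every `ν > 0`
and every `M ≥ e`:
`∫₀^T ∫ |∫ (f − β_ν(f)) ψ dξ| dx dt ≤ ‖ψ‖_∞ (ν M ∫∫∫ f + (1/log M) ∫∫∫ f log₊ f)`. -/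
theorem truncation_error_estimate (T : ℝ) (hT : 0 < T) (d : ℕ) (hd : 1 ≤ d)
    (f : ℝ → EuclideanSpace ℝ (Fin d) → EuclideanSpace ℝ (Fin d) → ℝ)
    (hmeas : Measurable (fun p : ℝ × EuclideanSpace ℝ (Fin d) × EuclideanSpace ℝ (Fin d) =>
      f p.1 p.2.1 p.2.2))
    (hpos : ∀ t x ξ, 0 ≤ f t x ξ)
    (hint1 : (∫⁻ t in Set.Ioo 0 T, ∫⁻ x, ∫⁻ ξ, ENNReal.ofReal (f t x ξ)) < ⊤)
    (hint2 : (∫⁻ t in Set.Ioo 0 T, ∫⁻ x, ∫⁻ ξ,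
      ENNReal.ofReal (f t x ξ * max (Real.log (f t x ξ)) 0)) < ⊤)
    (ψ : EuclideanSpace ℝ (Fin d) → ℝ) (hψmeas : Measurable ψ)
    (ψnorm : ℝ) (hψbound : ∀ ξ, |ψ ξ| ≤ ψnorm)
    (ν M : ℝ) (hν : 0 < ν) (hM : Real.exp 1 ≤ M) :
    (∫⁻ t in Set.Ioo 0 T, ∫⁻ x, ENNReal.ofReal
        |∫ ξ, (f t x ξ - betaNu ν (f t x ξ)) * ψ ξ|) ≤
      ENNReal.ofReal ψnorm *
        (ENNReal.ofReal (ν * M) * (∫⁻ t in Set.Ioo 0 T, ∫⁻ x, ∫⁻ ξ, ENNReal.ofReal (f t x ξ)) +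
          ENNReal.ofReal (1 / Real.log M) * (∫⁻ t in Set.Ioo 0 T, ∫⁻ x, ∫⁻ ξ,
            ENNReal.ofReal (f t x ξ * max (Real.log (f t x ξ)) 0))) :=
  truncation_error_estimate_general T d f hmeas hpos ψ ψnorm hψbound ν M hν hM
end

section
/- Let (X, μ) be a measure space and let ρ, 𝒟 : X → [0,∞) and j : X → ℝ be measurable functions with |j| ≤ (ρ 𝒟)^{1/2} μ-almost everywhere. Assume ρ, 𝒟, and ρ log₊ ρ are integrable. Then ∫_X |j| (log₊ |j|)^{1/2} dμ ≤ ∫_X ρ log₊ ρ dμ + (1 + √2) ∫_X 𝒟 dμ. -/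
open MeasureTheory
open scoped ENNReal

lemma flux_ptwise (a r d : ℝ) (ha : 0 ≤ a) (hr : 0 ≤ r) (hd : 0 ≤ d)
    (h : a ≤ Real.sqrt (r * d)) :
    a * Real.sqrt (max (Real.log a) 0) ≤
      r * max (Real.log r) 0 + (1 + Real.sqrt 2) * d := by
  have hM : 0 ≤ max (Real.log r) 0 := le_max_right _ _
  have hs2 : 0 ≤ Real.sqrt 2 := Real.sqrt_nonneg 2
  have hrM : 0 ≤ r * max (Real.log r) 0 := mul_nonneg hr hM
  rcases le_or_gt a 1 with h1 | h1
  · have : max (Real.log a) 0 = 0 := max_eq_right (Real.log_nonpos ha h1)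
    rw [this, Real.sqrt_zero, mul_zero]
    nlinarith
  · -- a > 1
    have hL : 0 < Real.log a := Real.log_pos h1
    set L := Real.log a with hLdef
    have hmax : max L 0 = L := max_eq_left hL.le
    rw [hmax]
    have hsq : a ^ 2 ≤ r * d := by
      have := Real.sqrt_le_sqrt (Real.sq_sqrt (by positivity : (0:ℝ) ≤ r * d) ▸ le_refl (r*d))
      nlinarith [Real.sq_sqrt (by positivity : (0:ℝ) ≤ r * d), Real.sqrt_nonneg (r*d), h]
    have hrd1 : 1 < r * d := by nlinarith
    have hr0 : 0 < r := by
      rcases hr.lt_or_eq with h' | h'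
      · exact h'
      · exfalso; nlinarith
    have hd0 : 0 < d := by
      rcases hd.lt_or_eq with h' | h'
      · exact h'
      · exfalso; nlinarith
    -- L ≤ (log r + log d)/2
    have hlog2 : 2 * L ≤ Real.log r + Real.log d := by
      have h1' : Real.log (a ^ 2) ≤ Real.log (r * d) :=
        Real.log_le_log (by positivity) hsq
      rw [Real.log_pow, Real.log_mul hr0.ne' hd0.ne'] at h1'
      push_cast at h1'
      linarith
    -- r * log d ≤ 2 r M + 2 d
    have hrlogd : r * Real.log d ≤ 2 * (r * max (Real.log r) 0) + 2 * d := by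
      rcases le_or_gt d 1 with hd1 | hd1
      · have : Real.log d ≤ 0 := Real.log_nonpos hd hd1
        nlinarith
      · have hld : 0 < Real.log d := Real.log_pos hd1
        rcases le_or_gt r (Real.sqrt d) with hrd | hrd
        · -- log d ≤ 2 √d
          have hsd : Real.sqrt d * Real.sqrt d = d := Real.mul_self_sqrt hd
          have hsd0 : 0 < Real.sqrt d := Real.sqrt_pos.mpr hd0
          have h2 : Real.log (Real.sqrt d) ≤ Real.sqrt d - 1 :=
            Real.log_le_sub_one_of_pos hsd0
          have h3 : Real.log d = 2 * Real.log (Real.sqrt d) := by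
            have := Real.log_sqrt hd
            linarith
          nlinarith
        · -- log d ≤ 2 log r ≤ 2 M
          have hsd0 : 0 < Real.sqrt d := Real.sqrt_pos.mpr hd0
          have h3 : Real.log d = 2 * Real.log (Real.sqrt d) := by
            have := Real.log_sqrt hd
            linarith
          have h4 : Real.log (Real.sqrt d) ≤ Real.log r :=
            Real.log_le_log hsd0 hrd.le
          have h5 : Real.log r ≤ max (Real.log r) 0 := le_max_left _ _
          nlinarith
    have hrlogr : r * Real.log r ≤ r * max (Real.log r) 0 :=
      mul_le_mul_of_nonneg_left (le_max_left _ _) hr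
    have hrL : r * L ≤ (3/2) * (r * max (Real.log r) 0) + d := by nlinarith
    -- a √L ≤ (rL + d)/2
    have hsL : Real.sqrt L * Real.sqrt L = L := Real.mul_self_sqrt hL.le
    have hX : 0 ≤ a * Real.sqrt L := by positivity
    have hY : 0 ≤ (r * L + d) / 2 := by positivity
    have hXY : (a * Real.sqrt L) ^ 2 ≤ ((r * L + d) / 2) ^ 2 := by
      have : (a * Real.sqrt L) ^ 2 ≤ r * d * L := by nlinarith
      nlinarith [sq_nonneg (r * L - d)]
    have hfin : a * Real.sqrt L ≤ (r * L + d) / 2 := by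
      have h6 := Real.sqrt_le_sqrt hXY
      rwa [Real.sqrt_sq hX, Real.sqrt_sq hY] at h6
    have h7 : 0 ≤ Real.sqrt 2 * d := mul_nonneg hs2 hd
    linarith

/-- on a measure space, if `ρ, 𝒟 ≥ 0`, `|j| ≤ (ρ 𝒟)^{1/2}` a.e., and
`ρ`, `𝒟`, `ρ log₊ ρ` are integrable, then
`∫ |j| (log₊ |j|)^{1/2} ≤ ∫ ρ log₊ ρ + (1 + √2) ∫ 𝒟`. -/
theorem flux_log_estimate {X : Type*} [MeasurableSpace X] (μ : Measure X)
    (ρ 𝒟 : X → ℝ) (j : X → ℝ)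
    (hρmeas : Measurable ρ) (h𝒟meas : Measurable 𝒟) (hjmeas : Measurable j)
    (hρ0 : ∀ x, 0 ≤ ρ x) (h𝒟0 : ∀ x, 0 ≤ 𝒟 x)
    (hj : ∀ᵐ x ∂μ, |j x| ≤ Real.sqrt (ρ x * 𝒟 x))
    (hρint : Integrable ρ μ) (h𝒟int : Integrable 𝒟 μ)
    (hρlog : Integrable (fun x => ρ x * max (Real.log (ρ x)) 0) μ) :
    (∫⁻ x, ENNReal.ofReal (|j x| * Real.sqrt (max (Real.log |j x|) 0)) ∂μ) ≤
      ENNReal.ofReal ((∫ x, ρ x * max (Real.log (ρ x)) 0 ∂μ) +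
        (1 + Real.sqrt 2) * ∫ x, 𝒟 x ∂μ) := by
  set g : X → ℝ := fun x => ρ x * max (Real.log (ρ x)) 0 + (1 + Real.sqrt 2) * 𝒟 x with hg
  have hgint : Integrable g μ := hρlog.add (h𝒟int.const_mul _)
  have hgnn : 0 ≤ᵐ[μ] g := Filter.Eventually.of_forall fun x => by
    have : 0 ≤ Real.sqrt 2 := Real.sqrt_nonneg 2
    have h1 : 0 ≤ ρ x * max (Real.log (ρ x)) 0 := mul_nonneg (hρ0 x) (le_max_right _ _)
    have h2 : 0 ≤ (1 + Real.sqrt 2) * 𝒟 x := mul_nonneg (by linarith) (h𝒟0 x)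
    simp only [Pi.zero_apply, hg]; linarith
  have key : (∫⁻ x, ENNReal.ofReal (|j x| * Real.sqrt (max (Real.log |j x|) 0)) ∂μ) ≤
      ∫⁻ x, ENNReal.ofReal (g x) ∂μ := by
    refine lintegral_mono_ae ?_
    filter_upwards [hj] with x hx
    exact ENNReal.ofReal_le_ofReal
      (flux_ptwise |j x| (ρ x) (𝒟 x) (abs_nonneg _) (hρ0 x) (h𝒟0 x) hx)
  have heq : (∫⁻ x, ENNReal.ofReal (g x) ∂μ) = ENNReal.ofReal (∫ x, g x ∂μ) :=
    (ofReal_integral_eq_lintegral_ofReal hgint hgnn).symm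
  have hsplit : (∫ x, g x ∂μ) =
      (∫ x, ρ x * max (Real.log (ρ x)) 0 ∂μ) + (1 + Real.sqrt 2) * ∫ x, 𝒟 x ∂μ := by
    rw [hg, integral_add hρlog (h𝒟int.const_mul _), MeasureTheory.integral_const_mul]
  rw [heq, hsplit] at key
  exact key
end

section
/- For all real numbers u ≥ 1 and v ≥ 0 with uv ≥ 1, one has (uv)^{1/2} (log(uv))^{1/2} ≤ u log u + √2 · v. -/
/-- For all real numbers `u ≥ 1` and `v ≥ 0` with `u * v ≥ 1`, one has
`(u*v)^{1/2} (log (u*v))^{1/2} ≤ u log u + √2 · v`. -/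
theorem sqrt_mul_sqrt_log_le (u v : ℝ) (hu : 1 ≤ u) (hv : 0 ≤ v) (huv : 1 ≤ u * v) :
    Real.sqrt (u * v) * Real.sqrt (Real.log (u * v)) ≤
      u * Real.log u + Real.sqrt 2 * v := by
  have hu0 : (0:ℝ) < u := lt_of_lt_of_le zero_lt_one hu
  have hv0 : (0:ℝ) < v := by nlinarith
  have hlog : 0 ≤ Real.log (u * v) := Real.log_nonneg huv
  have hlogu : 0 ≤ Real.log u := Real.log_nonneg hu
  have hs2 : Real.sqrt 2 ^ 2 = 2 := Real.sq_sqrt (by norm_num)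
  have hs2' : (1:ℝ) ≤ Real.sqrt 2 := by nlinarith [Real.sqrt_nonneg 2]
  have hrhs : 0 ≤ u * Real.log u + Real.sqrt 2 * v := by
    nlinarith [mul_nonneg hu0.le hlogu, mul_nonneg (Real.sqrt_nonneg 2) hv]
  have hmul : Real.log (u * v) = Real.log u + Real.log v :=
    Real.log_mul (ne_of_gt hu0) (ne_of_gt hv0)
  rw [← Real.sqrt_mul (by positivity)]
  have key : u * v * Real.log (u * v) ≤ (u * Real.log u + Real.sqrt 2 * v) ^ 2 := by
    rcases le_total v u with h | h
    · have hlv : Real.log v ≤ Real.log u := by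
        have := Real.log_le_log hv0 h
        linarith
      have hlog2 : Real.log (u * v) ≤ 2 * Real.log u := by rw [hmul]; linarith
      have huv0 : 0 ≤ u * v := by positivity
      have h1 : u * v * Real.log (u * v) ≤ u * v * (2 * Real.log u) :=
        mul_le_mul_of_nonneg_left hlog2 huv0
      nlinarith [sq_nonneg (u * Real.log u - Real.sqrt 2 * v),
        mul_nonneg (mul_nonneg huv0 hlogu) (sub_nonneg.2 hs2')]
    · have hlv : u * Real.log v ≤ u * Real.log u + v - u := by
        have h1 : Real.log (v / u) ≤ v / u - 1 :=
          Real.log_le_sub_one_of_pos (by positivity)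
        rw [Real.log_div (ne_of_gt hv0) (ne_of_gt hu0)] at h1
        have h2 := mul_le_mul_of_nonneg_left h1 hu0.le
        have h3 : u * (v / u - 1) = v - u := by field_simp
        nlinarith
      set t := u * Real.log (u * v) with ht
      have ht0 : 0 ≤ t := mul_nonneg hu0.le hlog
      have h1 : u * v * Real.log (u * v) ≤ ((t + v) / 2) ^ 2 := by
        have : u * v * Real.log (u * v) = t * v := by ring
        rw [this]
        nlinarith [sq_nonneg (t - v)]
      have h2 : t + v ≤ 2 * (u * Real.log u + Real.sqrt 2 * v) := by
        have ht' : t = u * Real.log u + u * Real.log v := by rw [ht, hmul]; ring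
        nlinarith [mul_nonneg (sub_nonneg.2 hs2') hv]
      have h3 : ((t + v) / 2) ^ 2 ≤ (u * Real.log u + Real.sqrt 2 * v) ^ 2 := by
        nlinarith [add_nonneg ht0 hv]
      linarith
  calc Real.sqrt (u * v * Real.log (u * v))
      ≤ Real.sqrt ((u * Real.log u + Real.sqrt 2 * v) ^ 2) := Real.sqrt_le_sqrt key
    _ = u * Real.log u + Real.sqrt 2 * v := Real.sqrt_sq hrhs
end
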